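/- arXiv:2006.01293 — 4 statements merged into one kernel-verified Lean document; each statement's English description precedes it below -/
import Mathlib

section
/- There exists an integer submodular function on {0,1,2}² (i.e. satisfying f(x)+f(y) ≥ f(x∨y)+f(x∧y) for all x,y) that is not DR-submodular, i.e. there exist x ≤ y and a coordinate i with x+eᵢ and y+eᵢ in the domain such that f(x+eᵢ) − f(x) < f(y+eᵢ) − f(y). -/
/-- there is an integer submodular function on `{0,1,2}²`
that is not DR-submodular. -/
theorem stmt2 : ∃ f : (Fin 2 → ℕ) → ℝ,
    (∀ x y : Fin 2 → ℕ, (∀ t, x t < 3) → (∀ t, y t < 3) →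
      f (x ⊔ y) + f (x ⊓ y) ≤ f x + f y) ∧
    ∃ (x y : Fin 2 → ℕ) (i : Fin 2), x ≤ y ∧ (∀ t, x t < 3) ∧
      (∀ t, y t + (if t = i then 1 else 0) < 3) ∧
      f (fun t => x t + if t = i then 1 else 0) - f x <
        f (fun t => y t + if t = i then 1 else 0) - f y := by
  refine ⟨fun v => ((v 0 : ℝ))^2, ?_, fun _ => 0, fun t => if t = 0 then 1 else 0, 0,
    ?_, ?_, ?_, ?_⟩
  · intro x y _ _
    simp only [Pi.sup_apply, Pi.inf_apply]
    rcases le_total (x 0) (y 0) with h | h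
    · rw [sup_of_le_right h, inf_of_le_left h]; exact le_of_eq (by ring)
    · rw [sup_of_le_left h, inf_of_le_right h]
  · intro t; simp
  · intro t; norm_num
  · intro t; split <;> simp_all
  · norm_num
end

section
/- Let f : ({0,...,k-1})ⁿ → ℝ and let F(ρ) = E[f(R(ρ))] be its generalized multilinear extension, where R(ρ) samples each coordinate independently from a categorical distribution with parameters ρᵢ ∈ Δ^{k-1}. If f is monotone (x ≤ y implies f(x) ≤ f(y)), then ∂F/∂ρ_{ij} ≥ 0 for all i ∈ {1,...,n} and j ∈ {1,...,k-1}, where the categorical distribution assigns probability ρ_{ij} to value j and 1 − Σⱼ ρ_{ij} to value 0. -/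
open Finset

/-- Categorical probability determined by the free parameters `ρ i j` (`j ≠ 0`):
`pᵢ(j) = ρᵢⱼ` for `j ≥ 1` and `pᵢ(0) = 1 - Σ_{j≥1} ρᵢⱼ`. -/
def catProb {n k : ℕ} [NeZero k] (ρ : Fin n → Fin k → ℝ) (i : Fin n) (x : Fin k) : ℝ :=
  if x = 0 then 1 - ∑ j ∈ Finset.univ.erase (0 : Fin k), ρ i j else ρ i x

/-- The generalized multilinear extension `F(ρ) = Σ_x f(x) ∏ᵢ pᵢ(xᵢ)`. -/
def gme {n k : ℕ} [NeZero k] (f : (Fin n → Fin k) → ℝ) (ρ : Fin n → Fin k → ℝ) : ℝ :=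
  ∑ x : Fin n → Fin k, f x * ∏ i, catProb ρ i (x i)

/-- Update a single entry `ρ i j` to the value `t`. -/
def updEntry {n k : ℕ} (ρ : Fin n → Fin k → ℝ) (i : Fin n) (j : Fin k) (t : ℝ) :
    Fin n → Fin k → ℝ :=
  fun i' j' => if i' = i ∧ j' = j then t else ρ i' j'

/-- if `f` is monotone, then `∂F/∂ρᵢⱼ ≥ 0` on the product of simplices. -/
theorem stmt5 {n k : ℕ} [NeZero k] (f : (Fin n → Fin k) → ℝ)
    (hmono : ∀ x y : Fin n → Fin k, x ≤ y → f x ≤ f y)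
    (ρ : Fin n → Fin k → ℝ)
    (hnn : ∀ i j, 0 ≤ ρ i j)
    (hsum : ∀ i, ∑ j ∈ Finset.univ.erase (0 : Fin k), ρ i j ≤ 1)
    (i : Fin n) (j : Fin k) (hj : j ≠ 0) :
    0 ≤ deriv (fun t => gme f (updEntry ρ i j t)) (ρ i j) := by
  classical
  set S : ℝ := ∑ j' ∈ Finset.univ.erase (0 : Fin k), ρ i j' with hSdef
  set P : (Fin n → Fin k) → ℝ :=
    fun x => ∏ i' ∈ Finset.univ.erase i, catProb ρ i' (x i') with hPdef
  set c : (Fin n → Fin k) → ℝ := fun x => f x * P x with hcdef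
  set s : (Fin n → Fin k) → ℝ :=
    fun x => if x i = 0 then -1 else if x i = j then 1 else 0 with hsdef
  -- the updated sum
  have hSsum : ∀ t : ℝ, ∑ j' ∈ Finset.univ.erase (0 : Fin k), updEntry ρ i j t i j'
      = S - ρ i j + t := by
    intro t
    have hjmem : j ∈ Finset.univ.erase (0 : Fin k) :=
      Finset.mem_erase.mpr ⟨hj, Finset.mem_univ j⟩
    rw [← Finset.add_sum_erase _ _ hjmem, hSdef,
      ← Finset.add_sum_erase _ (fun j' => ρ i j') hjmem]
    have h1 : updEntry ρ i j t i j = t := by simp [updEntry]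
    have h2 : ∀ j' ∈ (Finset.univ.erase (0 : Fin k)).erase j,
        updEntry ρ i j t i j' = ρ i j' := by
      intro j' hj'
      have : j' ≠ j := (Finset.mem_erase.mp hj').1
      simp [updEntry, this]
    rw [h1, Finset.sum_congr rfl h2]
    ring
  have hcat : ∀ (t : ℝ) (x : Fin n → Fin k), catProb (updEntry ρ i j t) i (x i)
      = (if x i = 0 then 1 - S + ρ i j - t else if x i = j then t else ρ i (x i)) := by
    intro t x
    by_cases h0 : x i = 0
    · simp only [catProb, h0, if_true, hSsum t]
      ring
    · have hx : x i ≠ 0 := h0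
      simp only [catProb, hx, if_neg hx, h0, if_false, updEntry]
      by_cases hxj : x i = j <;> simp [hxj]
  have hcat' : ∀ (t : ℝ) (i' : Fin n), i' ≠ i →
      ∀ x', catProb (updEntry ρ i j t) i' x' = catProb ρ i' x' := by
    intro t i' hi' x'
    simp [catProb, updEntry, hi']
  have hgme : ∀ t : ℝ, gme f (updEntry ρ i j t) =
      ∑ x : Fin n → Fin k, c x *
        (if x i = 0 then 1 - S + ρ i j - t else if x i = j then t else ρ i (x i)) := by
    intro t
    unfold gme
    refine Finset.sum_congr rfl fun x _ => ?_
    rw [← Finset.prod_erase_mul Finset.univ _ (Finset.mem_univ i), hcat]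
    have hPeq : ∏ i' ∈ Finset.univ.erase i, catProb (updEntry ρ i j t) i' (x i') = P x :=
      Finset.prod_congr rfl fun i' hi' => hcat' t i' (Finset.mem_erase.mp hi').1 _
    rw [hPeq, hcdef]
    ring
  have hderiv : HasDerivAt (fun t => gme f (updEntry ρ i j t))
      (∑ x : Fin n → Fin k, c x * s x) (ρ i j) := by
    have heq : (fun t => gme f (updEntry ρ i j t)) =
        fun t => ∑ x : Fin n → Fin k, c x *
          (if x i = 0 then 1 - S + ρ i j - t else if x i = j then t else ρ i (x i)) :=
      funext hgme
    rw [heq]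
    apply HasDerivAt.fun_sum
    intro x _
    by_cases h0 : x i = 0
    · have hsx : s x = -1 := if_pos h0
      rw [hsx]
      have heq : (fun t : ℝ => c x *
          (if x i = 0 then 1 - S + ρ i j - t else if x i = j then t else ρ i (x i)))
          = fun t : ℝ => c x * (1 - S + ρ i j - t) := by
        funext t; rw [if_pos h0]
      rw [heq]
      exact ((hasDerivAt_id (ρ i j)).const_sub (1 - S + ρ i j)).const_mul (c x)
    · by_cases hxj : x i = j
      · have hsx : s x = 1 := (if_neg h0).trans (if_pos hxj)
        rw [hsx]
        have heq : (fun t : ℝ => c x *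
            (if x i = 0 then 1 - S + ρ i j - t else if x i = j then t else ρ i (x i)))
            = fun t : ℝ => c x * t := by
          funext t; rw [if_neg h0, if_pos hxj]
        rw [heq]
        exact (hasDerivAt_id (ρ i j)).const_mul (c x)
      · have hsx : s x = 0 := (if_neg h0).trans (if_neg hxj)
        rw [hsx]
        have heq : (fun t : ℝ => c x *
            (if x i = 0 then 1 - S + ρ i j - t else if x i = j then t else ρ i (x i)))
            = fun _ : ℝ => c x * ρ i (x i) := by
          funext t; rw [if_neg h0, if_neg hxj]
        rw [heq]
        simpa using hasDerivAt_const (ρ i j) (c x * ρ i (x i))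
  rw [hderiv.deriv]
  -- nonnegativity of P
  have hcatnn : ∀ (i' : Fin n) (x' : Fin k), 0 ≤ catProb ρ i' x' := by
    intro i' x'
    by_cases h : x' = 0
    · simp only [catProb, h, if_true]
      linarith [hsum i']
    · simp only [catProb, h, if_false]
      exact hnn i' x'
  have hPnn : ∀ x, 0 ≤ P x := fun x =>
    Finset.prod_nonneg fun i' _ => hcatnn i' (x i')
  -- rewrite the sum as a difference over two fibers
  have hsplit : ∑ x : Fin n → Fin k, c x * s x
      = (∑ x ∈ Finset.univ.filter (fun x : Fin n → Fin k => x i = j), c x)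
        - ∑ x ∈ Finset.univ.filter (fun x : Fin n → Fin k => x i = 0), c x := by
    rw [Finset.sum_filter, Finset.sum_filter, ← Finset.sum_sub_distrib]
    refine Finset.sum_congr rfl fun x _ => ?_
    by_cases h0 : x i = 0
    · have h1 : x i ≠ j := by rw [h0]; exact fun h => hj h.symm
      rw [if_neg h1, if_pos h0, show s x = -1 from if_pos h0]
      ring
    · by_cases hxj : x i = j
      · rw [if_pos hxj, if_neg h0, show s x = 1 from (if_neg h0).trans (if_pos hxj)]
        ring
      · rw [if_neg hxj, if_neg h0, show s x = 0 from (if_neg h0).trans (if_neg hxj)]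
        ring
  rw [hsplit]
  have hbij : ∑ x ∈ Finset.univ.filter (fun x : Fin n → Fin k => x i = j), c x
      = ∑ x ∈ Finset.univ.filter (fun x : Fin n → Fin k => x i = 0),
          c (Function.update x i j) := by
    refine Finset.sum_nbij' (fun x => Function.update x i 0)
      (fun x => Function.update x i j) ?_ ?_ ?_ ?_ ?_
    · intro x hx; simp
    · intro x hx; simp
    · intro x hx
      have hx' : x i = j := by simpa using hx
      show Function.update (Function.update x i 0) i j = x
      rw [Function.update_idem, ← hx', Function.update_eq_self]
    · intro x hx
      have hx' : x i = 0 := by simpa using hx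
      show Function.update (Function.update x i j) i 0 = x
      rw [Function.update_idem, ← hx', Function.update_eq_self]
    · intro x hx
      have hx' : x i = j := by simpa using hx
      show c x = c (Function.update (Function.update x i 0) i j)
      rw [Function.update_idem, ← hx', Function.update_eq_self]
  rw [hbij, ← Finset.sum_sub_distrib]
  apply Finset.sum_nonneg
  intro x hx
  have hx0 : x i = 0 := by simpa using hx
  have hPeq : P (Function.update x i j) = P x := by
    refine Finset.prod_congr rfl fun i' hi' => ?_
    have : i' ≠ i := (Finset.mem_erase.mp hi').1
    rw [Function.update_of_ne this]
  have hle : x ≤ Function.update x i j := by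
    intro i'
    by_cases h : i' = i
    · subst h; rw [Function.update_self, hx0]; exact Fin.zero_le j
    · rw [Function.update_of_ne h]
  have := hmono x (Function.update x i j) hle
  have : c x ≤ c (Function.update x i j) := by
    rw [hcdef]
    simp only [hPeq]
    exact mul_le_mul_of_nonneg_right this (hPnn x)
  linarith
end

section
/- If f : {0,...,k-1}ⁿ → ℝ is lattice submodular, then its generalized multilinear extension F is DR-submodular: ∂²F/(∂ρ_{ij}∂ρ_{ℓm}) ≤ 0 for all pairs of entries (i,j), (ℓ,m), where the mixed partial vanishes when i = ℓ. -/
open Finset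

/-- The second partial derivative `∂²G/(∂ρᵢⱼ ∂ρₗₘ)` at `ρ`, expressed via `deriv`. -/
noncomputable def secondPartial {n k : ℕ} (G : (Fin n → Fin k → ℝ) → ℝ)
    (ρ : Fin n → Fin k → ℝ) (i : Fin n) (j : Fin k) (l : Fin n) (m : Fin k) : ℝ :=
  deriv (fun s =>
    deriv (fun t => G (updEntry (updEntry ρ l m s) i j t)) ((updEntry ρ l m s) i j)) (ρ l m)

/-! ### Auxiliary definitions -/

/-- Coefficient of the variable `ρ i j` in `catProb ρ i y` (for `j ≠ 0`). -/
def coeff {k : ℕ} [NeZero k] (j y : Fin k) : ℝ :=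
  if y = j then 1 else if y = 0 then -1 else 0

/-- First partial derivative of `gme f` w.r.t. `ρ i j`. -/
noncomputable def Dext {n k : ℕ} [NeZero k] (f : (Fin n → Fin k) → ℝ)
    (ρ : Fin n → Fin k → ℝ) (i : Fin n) (j : Fin k) : ℝ :=
  ∑ x : Fin n → Fin k, f x * coeff j (x i) * ∏ i' ∈ Finset.univ.erase i, catProb ρ i' (x i')

/-- Second mixed partial derivative of `gme f`. -/
noncomputable def Eext {n k : ℕ} [NeZero k] (f : (Fin n → Fin k) → ℝ)
    (ρ : Fin n → Fin k → ℝ) (i : Fin n) (j : Fin k) (l : Fin n) (m : Fin k) : ℝ :=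
  ∑ x : Fin n → Fin k, f x * coeff j (x i) * coeff m (x l) *
    ∏ i' ∈ (Finset.univ.erase i).erase l, catProb ρ i' (x i')

lemma deriv_affine (A B c : ℝ) (t0 : ℝ) : deriv (fun t => A + (t - c) * B) t0 = B := by
  have h : HasDerivAt (fun t : ℝ => A + (t - c) * B) B t0 := by
    simpa using (((hasDerivAt_id t0).sub_const c).mul_const B).const_add A
  exact h.deriv

lemma catProb_updEntry_ne {n k : ℕ} [NeZero k] (ρ : Fin n → Fin k → ℝ) {i i' : Fin n}
    (h : i' ≠ i) (j : Fin k) (t : ℝ) (y : Fin k) :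
    catProb (updEntry ρ i j t) i' y = catProb ρ i' y := by
  simp [catProb, updEntry, h]

lemma catProb_updEntry_self {n k : ℕ} [NeZero k] (ρ : Fin n → Fin k → ℝ) (i : Fin n)
    {j : Fin k} (hj : j ≠ 0) (t : ℝ) (y : Fin k) :
    catProb (updEntry ρ i j t) i y = catProb ρ i y + coeff j y * (t - ρ i j) := by
  have hjmem : j ∈ (Finset.univ.erase (0 : Fin k)) :=
    Finset.mem_erase.mpr ⟨hj, Finset.mem_univ j⟩
  unfold catProb coeff updEntry
  by_cases h0 : y = 0
  · subst h0
    rw [if_pos rfl, if_pos rfl, if_neg (Ne.symm hj), if_pos rfl]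
    have hfun : (fun j' => if i = i ∧ j' = j then t else ρ i j') = Function.update (ρ i) j t := by
      funext j'; simp [Function.update_apply]
    have h1 : ∑ j' ∈ Finset.univ.erase (0 : Fin k), (if i = i ∧ j' = j then t else ρ i j')
        = t + ∑ j' ∈ (Finset.univ.erase (0 : Fin k)).erase j, ρ i j' := by
      rw [hfun, Finset.sum_update_of_mem hjmem, Finset.sdiff_singleton_eq_erase]
    rw [h1, ← Finset.add_sum_erase _ (ρ i) hjmem]
    ring
  · rw [if_neg h0, if_neg h0]
    by_cases hyj : y = j
    · subst hyj; rw [if_pos ⟨rfl, rfl⟩, if_pos rfl]; ring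
    · rw [if_neg (by simp [hyj]), if_neg hyj, if_neg h0]; ring

lemma gme_updEntry {n k : ℕ} [NeZero k] (f : (Fin n → Fin k) → ℝ) (ρ : Fin n → Fin k → ℝ)
    (i : Fin n) {j : Fin k} (hj : j ≠ 0) (t : ℝ) :
    gme f (updEntry ρ i j t) = gme f ρ + (t - ρ i j) * Dext f ρ i j := by
  unfold gme Dext
  rw [Finset.mul_sum, ← Finset.sum_add_distrib]
  refine Finset.sum_congr rfl fun x _ => ?_
  rw [← Finset.mul_prod_erase Finset.univ _ (Finset.mem_univ i),
      ← Finset.mul_prod_erase Finset.univ (fun i' => catProb ρ i' (x i')) (Finset.mem_univ i)]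
  have hP : ∏ i' ∈ Finset.univ.erase i, catProb (updEntry ρ i j t) i' (x i')
      = ∏ i' ∈ Finset.univ.erase i, catProb ρ i' (x i') :=
    Finset.prod_congr rfl fun i' hi' => catProb_updEntry_ne ρ (Finset.ne_of_mem_erase hi') j t _
  rw [hP, catProb_updEntry_self ρ i hj t (x i)]
  ring

lemma deriv_gme_updEntry {n k : ℕ} [NeZero k] (f : (Fin n → Fin k) → ℝ)
    (ρ : Fin n → Fin k → ℝ) (i : Fin n) {j : Fin k} (hj : j ≠ 0) (t0 : ℝ) :
    deriv (fun t => gme f (updEntry ρ i j t)) t0 = Dext f ρ i j := by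
  have h : (fun t => gme f (updEntry ρ i j t))
      = fun t => gme f ρ + (t - ρ i j) * Dext f ρ i j :=
    funext fun t => gme_updEntry f ρ i hj t
  rw [h, deriv_affine]

lemma Dext_updEntry_same_row {n k : ℕ} [NeZero k] (f : (Fin n → Fin k) → ℝ)
    (ρ : Fin n → Fin k → ℝ) (i : Fin n) (j m : Fin k) (s : ℝ) :
    Dext f (updEntry ρ i m s) i j = Dext f ρ i j := by
  unfold Dext
  refine Finset.sum_congr rfl fun x _ => ?_
  congr 1
  exact Finset.prod_congr rfl fun i' hi' =>
    catProb_updEntry_ne ρ (Finset.ne_of_mem_erase hi') m s _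

lemma Dext_updEntry {n k : ℕ} [NeZero k] (f : (Fin n → Fin k) → ℝ)
    (ρ : Fin n → Fin k → ℝ) (i : Fin n) (j : Fin k) {l : Fin n} (hli : l ≠ i)
    {m : Fin k} (hm : m ≠ 0) (s : ℝ) :
    Dext f (updEntry ρ l m s) i j = Dext f ρ i j + (s - ρ l m) * Eext f ρ i j l m := by
  unfold Dext Eext
  rw [Finset.mul_sum, ← Finset.sum_add_distrib]
  refine Finset.sum_congr rfl fun x _ => ?_
  have hl : l ∈ Finset.univ.erase i := Finset.mem_erase.mpr ⟨hli, Finset.mem_univ l⟩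
  rw [← Finset.mul_prod_erase _ _ hl,
      ← Finset.mul_prod_erase _ (fun i' => catProb ρ i' (x i')) hl]
  have hP : ∏ i' ∈ (Finset.univ.erase i).erase l, catProb (updEntry ρ l m s) i' (x i')
      = ∏ i' ∈ (Finset.univ.erase i).erase l, catProb ρ i' (x i') :=
    Finset.prod_congr rfl fun i' hi' => catProb_updEntry_ne ρ (Finset.ne_of_mem_erase hi') m s _
  rw [hP, catProb_updEntry_self ρ l hm s (x l)]
  ring

lemma catProb_nonneg {n k : ℕ} [NeZero k] {ρ : Fin n → Fin k → ℝ}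
    (hnn : ∀ i j, 0 ≤ ρ i j)
    (hsum : ∀ i, ∑ j ∈ Finset.univ.erase (0 : Fin k), ρ i j ≤ 1)
    (i : Fin n) (y : Fin k) : 0 ≤ catProb ρ i y := by
  unfold catProb
  split
  · linarith [hsum i]
  · exact hnn i y

lemma Eext_nonpos {n k : ℕ} [NeZero k] (f : (Fin n → Fin k) → ℝ)
    (hsub : ∀ x y : Fin n → Fin k, f (x ⊔ y) + f (x ⊓ y) ≤ f x + f y)
    (ρ : Fin n → Fin k → ℝ)
    (hnn : ∀ i j, 0 ≤ ρ i j)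
    (hsum : ∀ i, ∑ j ∈ Finset.univ.erase (0 : Fin k), ρ i j ≤ 1)
    {i : Fin n} {j : Fin k} (hj : j ≠ 0) {l : Fin n} {m : Fin k} (hm : m ≠ 0)
    (hil : i ≠ l) :
    Eext f ρ i j l m ≤ 0 := by
  set P : (Fin n → Fin k) → ℝ :=
    fun x => ∏ i' ∈ (Finset.univ.erase i).erase l, catProb ρ i' (x i') with hPdef
  have hPnn : ∀ x, 0 ≤ P x := fun x =>
    Finset.prod_nonneg fun i' _ => catProb_nonneg hnn hsum i' (x i')
  set u2 : (Fin n → Fin k) → Fin k → Fin k → (Fin n → Fin k) :=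
    fun x a b => Function.update (Function.update x i a) l b with hu2def
  have hu2i : ∀ x a b, u2 x a b i = a := by
    intro x a b; simp [hu2def, Function.update_apply, hil]
  have hu2l : ∀ x a b, u2 x a b l = b := by
    intro x a b; simp [hu2def, Function.update_apply]
  have hu2ne : ∀ x a b c, c ≠ i → c ≠ l → u2 x a b c = x c := by
    intro x a b c hci hcl; simp [hu2def, Function.update_apply, hci, hcl]
  have hPu2 : ∀ x a b, P (u2 x a b) = P x := by
    intro x a b
    refine Finset.prod_congr rfl fun i' hi' => ?_
    rw [hu2ne x a b i' (Finset.ne_of_mem_erase (Finset.mem_of_mem_erase hi'))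
      (Finset.ne_of_mem_erase hi')]
  set F : Fin k → Fin k → Finset (Fin n → Fin k) :=
    fun a b => Finset.univ.filter (fun x => x i = a ∧ x l = b) with hFdef
  -- change of variables for each fiber
  have hcancel : ∀ (x : Fin n → Fin k) (p q a' b' : Fin k), x i = a' → x l = b' →
      u2 (u2 x p q) a' b' = x := by
    intro x p q a' b' hxi hxl
    funext c
    by_cases hci : c = i
    · subst hci; rw [hu2i, hxi]
    · by_cases hcl : c = l
      · subst hcl; rw [hu2l, hxl]
      · rw [hu2ne _ _ _ c hci hcl, hu2ne _ _ _ c hci hcl]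
  have hS : ∀ a b : Fin k, ∑ x ∈ F a b, f x * P x = ∑ x ∈ F 0 0, f (u2 x a b) * P x := by
    intro a b
    refine Finset.sum_nbij' (fun x => u2 x 0 0) (fun x => u2 x a b) ?_ ?_ ?_ ?_ ?_
    · intro x hx
      simp only [hFdef, Finset.mem_filter, Finset.mem_univ, true_and]
      exact ⟨hu2i x 0 0, hu2l x 0 0⟩
    · intro x hx
      simp only [hFdef, Finset.mem_filter, Finset.mem_univ, true_and]
      exact ⟨hu2i x a b, hu2l x a b⟩
    · intro x hx
      simp only [hFdef, Finset.mem_filter, Finset.mem_univ, true_and] at hx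
      exact hcancel x 0 0 a b hx.1 hx.2
    · intro x hx
      simp only [hFdef, Finset.mem_filter, Finset.mem_univ, true_and] at hx
      exact hcancel x a b 0 0 hx.1 hx.2
    · intro x hx
      simp only [hFdef, Finset.mem_filter, Finset.mem_univ, true_and] at hx
      show f x * P x = f (u2 (u2 x 0 0) a b) * P (u2 x 0 0)
      rw [hPu2, hcancel x 0 0 a b hx.1 hx.2]
  -- decomposition of Eext into four fiber sums
  have hdec : Eext f ρ i j l m
      = (∑ x ∈ F j m, f x * P x) + (∑ x ∈ F 0 0, f x * P x)
        - (∑ x ∈ F j 0, f x * P x) - (∑ x ∈ F 0 m, f x * P x) := by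
    unfold Eext
    simp only [hFdef, Finset.sum_filter]
    rw [← Finset.sum_add_distrib, ← Finset.sum_sub_distrib, ← Finset.sum_sub_distrib]
    refine Finset.sum_congr rfl fun x _ => ?_
    by_cases h1 : x i = j <;> by_cases h2 : x i = 0 <;>
      by_cases h3 : x l = m <;> by_cases h4 : x l = 0 <;>
      simp_all [coeff, hPdef]
  rw [hdec, hS j m, hS 0 0, hS j 0, hS 0 m,
      ← Finset.sum_add_distrib, ← Finset.sum_sub_distrib, ← Finset.sum_sub_distrib]
  refine Finset.sum_nonpos fun x hx => ?_
  have hkey : f (u2 x j m) + f (u2 x 0 0) - f (u2 x j 0) - f (u2 x 0 m) ≤ 0 := by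
    have hsup : u2 x j 0 ⊔ u2 x 0 m = u2 x j m := by
      funext c
      by_cases hci : c = i
      · subst hci
        simp only [Pi.sup_apply, hu2i]
        exact sup_eq_left.mpr (Fin.zero_le j)
      · by_cases hcl : c = l
        · subst hcl
          simp only [Pi.sup_apply, hu2l]
          exact sup_eq_right.mpr (Fin.zero_le m)
        · simp only [Pi.sup_apply, hu2ne _ _ _ c hci hcl]
          exact sup_idem _
    have hinf : u2 x j 0 ⊓ u2 x 0 m = u2 x 0 0 := by
      funext c
      by_cases hci : c = i
      · subst hci
        simp only [Pi.inf_apply, hu2i]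
        exact inf_eq_right.mpr (Fin.zero_le j)
      · by_cases hcl : c = l
        · subst hcl
          simp only [Pi.inf_apply, hu2l]
          exact inf_eq_left.mpr (Fin.zero_le m)
        · simp only [Pi.inf_apply, hu2ne _ _ _ c hci hcl]
          exact inf_idem _
    have := hsub (u2 x j 0) (u2 x 0 m)
    rw [hsup, hinf] at this
    linarith
  have : f (u2 x j m) * P x + f (u2 x 0 0) * P x - f (u2 x j 0) * P x - f (u2 x 0 m) * P x
      = (f (u2 x j m) + f (u2 x 0 0) - f (u2 x j 0) - f (u2 x 0 m)) * P x := by ring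
  rw [this]
  exact mul_nonpos_iff.mpr (Or.inr ⟨hkey, hPnn x⟩)

/-- if `f` is lattice submodular then its generalized multilinear extension
is DR-submodular, i.e. all second partial derivatives are nonpositive. -/
theorem stmt7 {n k : ℕ} [NeZero k] (f : (Fin n → Fin k) → ℝ)
    (hsub : ∀ x y : Fin n → Fin k, f (x ⊔ y) + f (x ⊓ y) ≤ f x + f y)
    (ρ : Fin n → Fin k → ℝ)
    (hnn : ∀ i j, 0 ≤ ρ i j)
    (hsum : ∀ i, ∑ j ∈ Finset.univ.erase (0 : Fin k), ρ i j ≤ 1)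
    (i : Fin n) (j : Fin k) (hj : j ≠ 0) (l : Fin n) (m : Fin k) (hm : m ≠ 0) :
    secondPartial (gme f) ρ i j l m ≤ 0 := by
  unfold secondPartial
  have hinner : (fun s => deriv (fun t => gme f (updEntry (updEntry ρ l m s) i j t))
      ((updEntry ρ l m s) i j)) = fun s => Dext f (updEntry ρ l m s) i j :=
    funext fun s => deriv_gme_updEntry f (updEntry ρ l m s) i hj _
  rw [hinner]
  by_cases hil : i = l
  · subst hil
    have hconst : (fun s => Dext f (updEntry ρ i m s) i j) = fun _ => Dext f ρ i j :=
      funext fun s => Dext_updEntry_same_row f ρ i j m s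
    rw [hconst, deriv_const]
  · have haff : (fun s => Dext f (updEntry ρ l m s) i j)
        = fun s => Dext f ρ i j + (s - ρ l m) * Eext f ρ i j l m :=
      funext fun s => Dext_updEntry f ρ i j (Ne.symm hil) hm s
    rw [haff, deriv_affine]
    exact Eext_nonpos f hsub ρ hnn hsum hj hm hil
end

section
/- The revenue function f(x) = Σ_{i} Σ_{j ≠ i} W_{ij} (1 − q^{xᵢ}) q^{xⱼ}, defined on x ∈ ℕⁿ with W_{ij} ≥ 0 and q ∈ (0,1), is lattice submodular: f(x) + f(y) ≥ f(x∨y) + f(x∧y) for all x, y ∈ ℕⁿ. -/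
open Finset

/-- The revenue function `f(x) = Σᵢ Σ_{j≠i} Wᵢⱼ (1 - q^{xᵢ}) q^{xⱼ}`. -/
noncomputable def revenue {n : ℕ} (W : Fin n → Fin n → ℝ) (q : ℝ) (x : Fin n → ℕ) : ℝ :=
  ∑ i, ∑ j ∈ Finset.univ.erase i, W i j * (1 - q ^ x i) * q ^ x j

lemma key15 (q : ℝ) (hq0 : 0 < q) (hq1 : q < 1) (a b c d : ℕ) :
    (1 - q ^ max a b) * q ^ max c d + (1 - q ^ min a b) * q ^ min c d ≤
      (1 - q ^ a) * q ^ c + (1 - q ^ b) * q ^ d := by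
  rcases le_total a b with hab | hab <;> rcases le_total c d with hcd | hcd <;>
    simp only [max_eq_right, max_eq_left, min_eq_left, min_eq_right, hab, hcd] <;>
    nlinarith [pow_le_pow_of_le_one hq0.le hq1.le hab,
      pow_le_pow_of_le_one hq0.le hq1.le hcd,
      pow_pos hq0 a, pow_pos hq0 b, pow_pos hq0 c, pow_pos hq0 d]

/-- the revenue function with `W ≥ 0` and `q ∈ (0,1)` is lattice
submodular on `ℕⁿ`. -/
theorem stmt15 {n : ℕ} (W : Fin n → Fin n → ℝ) (hW : ∀ i j, 0 ≤ W i j)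
    (q : ℝ) (hq0 : 0 < q) (hq1 : q < 1) :
    ∀ x y : Fin n → ℕ,
      revenue W q (x ⊔ y) + revenue W q (x ⊓ y) ≤ revenue W q x + revenue W q y := by
  intro x y
  unfold revenue
  rw [← Finset.sum_add_distrib, ← Finset.sum_add_distrib]
  refine Finset.sum_le_sum fun i _ => ?_
  rw [← Finset.sum_add_distrib, ← Finset.sum_add_distrib]
  refine Finset.sum_le_sum fun j _ => ?_
  have h := key15 q hq0 hq1 (x i) (y i) (x j) (y j)
  have hxy : (x ⊔ y) i = max (x i) (y i) := rfl
  have hxy2 : (x ⊓ y) i = min (x i) (y i) := rfl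
  have hxy3 : (x ⊔ y) j = max (x j) (y j) := rfl
  have hxy4 : (x ⊓ y) j = min (x j) (y j) := rfl
  rw [hxy, hxy2, hxy3, hxy4]
  nlinarith [hW i j, h]
end
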